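/- Let f : F_2^N → {0,1} be a monotone Boolean function with E[f] = 2^{−k} (under the uniform measure) such that f̂(S) = 0 for every S ⊆ [N] with |S| > k. Then f is a k-umvirate: there exists a set T of k coordinates such that f(x) = 1 if and only if x_i = 1 for all i ∈ T. -/

import Mathlib

/-!
Take `T` inclusion-maximal with `f̂(T) ≠ 0`, so `|T| ≤ k`. Fourier inversion and maximality give
`∑_{R ⊆ T} (-1)^{|T \ R|} f(R) = (-2)^{|T|} f̂(T)`; the left side is a nonzero integer, hence
`1 ≤ 2^{|T|} |f̂(T)| ≤ 2^{|T|} E[f] = 2^{|T| - k}`. So `|T| = k` and `|f̂(T)| = E[f]`: the character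
`(-1)^{|T ∩ X|}` is constant on the support of `f`. Adding an element of `T` flips that character,
so the monotone support lies above `T`, the alternating sum collapses to `f(T)`, and `f(T) = 1`.
-/

/-- The Fourier coefficient `f̂(S) = E_X [f(X) (-1)^{|S ∩ X|}]` of a function on subsets of
`[N]`, under the uniform measure. -/
noncomputable def walshCoeff {N : ℕ} (f : Finset (Fin N) → ℝ) (S : Finset (Fin N)) : ℝ :=
  (∑ X : Finset (Fin N), f X * (-1) ^ (S ∩ X).card) / 2 ^ N

open Finset

namespace Friedgut

theorem exists_eq_of_abs_sum_mul_eq_sum {ι : Type*} (s : Finset ι) {w σ : ι → ℝ}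
    (hw : ∀ i ∈ s, 0 ≤ w i) (hσ : ∀ i ∈ s, |σ i| ≤ 1)
    (h : |∑ i ∈ s, w i * σ i| = ∑ i ∈ s, w i) : ∃ ε, ∀ i ∈ s, w i ≠ 0 → σ i = ε := by
  obtain ⟨ε, hε, hsum⟩ : ∃ ε : ℝ, (ε = 1 ∨ ε = -1) ∧ ∑ i ∈ s, w i * (1 - ε * σ i) = 0 := by
    rcases (abs_eq (sum_nonneg hw)).mp h with h | h
    · exact ⟨1, .inl rfl, by simp [mul_sub, sum_sub_distrib, h]⟩
    · exact ⟨-1, .inr rfl, by simp [mul_add, sum_add_distrib, h]⟩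
  have hnonneg : ∀ i ∈ s, 0 ≤ w i * (1 - ε * σ i) := fun i hi => by
    have := abs_le.mp (hσ i hi)
    exact mul_nonneg (hw i hi) (by rcases hε with rfl | rfl <;> linarith)
  refine ⟨ε, fun i hi hwi => ?_⟩
  have := (mul_eq_zero.mp ((sum_eq_zero_iff_of_nonneg hnonneg).mp hsum i hi)).resolve_left hwi
  rcases hε with rfl | rfl <;> linarith

section Subsets

variable {α : Type*} [DecidableEq α]

theorem neg_one_pow_card_inter_eq_prod (S X : Finset α) :
    (-1 : ℝ) ^ (S ∩ X).card = ∏ i ∈ S, if i ∈ X then -1 else 1 := by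
  rw [prod_ite_mem, prod_const]

theorem sum_neg_one_pow_card_inter_mul [Fintype α] (X Y : Finset α) :
    ∑ S : Finset α, (-1 : ℝ) ^ (S ∩ X).card * (-1) ^ (S ∩ Y).card
      = if X = Y then 2 ^ Fintype.card α else 0 := by
  simp_rw [neg_one_pow_card_inter_eq_prod, ← prod_mul_distrib]
  rw [← powerset_univ, ← prod_one_add]
  split_ifs with hXY
  · subst hXY
    rw [← card_univ, ← prod_const]
    exact prod_congr rfl fun i _ => by split_ifs <;> norm_num
  · obtain ⟨i, hi⟩ : ∃ i, ¬(i ∈ X ↔ i ∈ Y) := by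
      by_contra! h
      exact hXY (ext h)
    exact prod_eq_zero (mem_univ i) (by by_cases i ∈ X <;> by_cases i ∈ Y <;> simp_all)

theorem sum_powerset_neg_one_pow_card_sdiff_mul (T S : Finset α) :
    ∑ R ∈ T.powerset, (-1 : ℝ) ^ (T \ R).card * (-1) ^ (S ∩ R).card
      = if T ⊆ S then (-2) ^ T.card else 0 := by
  have h := prod_add (fun i => if i ∈ S then (-1 : ℝ) else 1) (fun _ => -1) T
  simp only [prod_const, ← neg_one_pow_card_inter_eq_prod] at h
  simp_rw [inter_comm S, mul_comm ((-1 : ℝ) ^ (T \ _).card), ← h]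
  split_ifs with hTS
  · rw [← prod_const]
    exact prod_congr rfl fun i hi => by rw [if_pos (hTS hi)]; norm_num
  · obtain ⟨i, hiT, hiS⟩ := not_subset.mp hTS
    exact prod_eq_zero hiT (by rw [if_neg hiS]; norm_num)

/-- The Möbius transform of `f`, so that `f X = ∑ T ⊆ X, mobius f T`. -/
def mobius (f : Finset α → ℝ) (T : Finset α) : ℝ :=
  ∑ R ∈ T.powerset, (-1) ^ (T \ R).card * f R

theorem one_le_abs_mobius {f : Finset α → ℝ} (hf : ∀ X, ∃ z : ℤ, f X = z) {T : Finset α}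
    (hT : mobius f T ≠ 0) : 1 ≤ |mobius f T| := by
  choose z hz using hf
  obtain ⟨m, hm⟩ : ∃ m : ℤ, mobius f T = m :=
    ⟨∑ R ∈ T.powerset, (-1) ^ (T \ R).card * z R, by simp [mobius, hz]⟩
  rw [hm] at hT ⊢
  exact_mod_cast Int.one_le_abs (by exact_mod_cast hT)

theorem mobius_eq_of_subset_of_ne_zero {f : Finset α → ℝ} {T : Finset α}
    (hf : ∀ X, f X ≠ 0 → T ⊆ X) : mobius f T = f T := by
  rw [mobius, sum_eq_single T (fun R hR hRT => ?_) (by simp), sdiff_self, bot_eq_empty,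
    card_empty, pow_zero, one_mul]
  by_contra h
  exact hRT (subset_antisymm (mem_powerset.mp hR) (hf R (right_ne_zero_of_mul h)))

theorem subset_of_ne_zero_of_neg_one_pow_eq {f : Finset α → ℝ} (hf : 0 ≤ f) (hmono : Monotone f)
    {T : Finset α} {ε : ℝ} (hε : ∀ X, f X ≠ 0 → (-1) ^ (T ∩ X).card = ε) {X : Finset α}
    (hX : f X ≠ 0) : T ⊆ X := by
  intro t ht
  by_contra htX
  have hins : f (insert t X) ≠ 0 :=
    ((lt_of_le_of_ne (hf X) (Ne.symm hX)).trans_le (hmono (subset_insert t X))).ne'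
  have hflip := hε _ hins
  rw [inter_insert_of_mem ht, card_insert_of_notMem fun h => htX (mem_inter.mp h).2, pow_succ,
    hε X hX] at hflip
  have hε0 : ε = 0 := by linarith
  exact pow_ne_zero _ (by norm_num : (-1 : ℝ) ≠ 0) ((hε X hX).trans hε0)

end Subsets

section Walsh

variable {N : ℕ}

theorem sum_walshCoeff_mul_neg_one_pow (f : Finset (Fin N) → ℝ) (X : Finset (Fin N)) :
    ∑ S, walshCoeff f S * (-1) ^ (S ∩ X).card = f X := by
  simp_rw [walshCoeff, div_mul_eq_mul_div, ← sum_div, sum_mul, mul_assoc]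
  rw [sum_comm]
  simp_rw [← mul_sum, sum_neg_one_pow_card_inter_mul, mul_ite, mul_zero, sum_ite_eq',
    mem_univ, if_true, Fintype.card_fin]
  field_simp

theorem abs_walshCoeff_le {f : Finset (Fin N) → ℝ} (hf : 0 ≤ f) (S : Finset (Fin N)) :
    |walshCoeff f S| ≤ walshCoeff f ∅ := by
  simp only [walshCoeff, abs_div, abs_of_pos (by positivity : (0 : ℝ) < 2 ^ N), empty_inter,
    card_empty, pow_zero, mul_one]
  gcongr
  refine (abs_sum_le_sum_abs _ _).trans_eq (sum_congr rfl fun X _ => ?_)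
  simp [abs_of_nonneg (hf X)]

theorem exists_neg_one_pow_eq_of_abs_walshCoeff_eq {f : Finset (Fin N) → ℝ} (hf : 0 ≤ f)
    {T : Finset (Fin N)} (hT : |walshCoeff f T| = walshCoeff f ∅) :
    ∃ ε : ℝ, ∀ X, f X ≠ 0 → (-1) ^ (T ∩ X).card = ε := by
  simp only [walshCoeff, abs_div, abs_of_pos (by positivity : (0 : ℝ) < 2 ^ N), empty_inter,
    card_empty, pow_zero, mul_one] at hT
  obtain ⟨ε, hε⟩ := exists_eq_of_abs_sum_mul_eq_sum univ (fun X _ => hf X) (fun X _ => by simp)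
    ((div_left_inj' (by positivity)).mp hT)
  exact ⟨ε, fun X => hε X (mem_univ X)⟩

theorem mobius_eq_walshCoeff {f : Finset (Fin N) → ℝ} {T : Finset (Fin N)}
    (hT : ∀ S, T ⊂ S → walshCoeff f S = 0) :
    mobius f T = (-2) ^ T.card * walshCoeff f T := by
  calc mobius f T
      = ∑ R ∈ T.powerset, (-1) ^ (T \ R).card * ∑ S, walshCoeff f S * (-1) ^ (S ∩ R).card := by
        simp_rw [mobius, sum_walshCoeff_mul_neg_one_pow]
    _ = ∑ S, walshCoeff f S *
          ∑ R ∈ T.powerset, (-1 : ℝ) ^ (T \ R).card * (-1) ^ (S ∩ R).card := by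
        simp_rw [mul_sum]
        rw [sum_comm]
        exact sum_congr rfl fun S _ => sum_congr rfl fun R _ => by ring
    _ = (-2) ^ T.card * walshCoeff f T := by
        simp_rw [sum_powerset_neg_one_pow_card_sdiff_mul]
        rw [sum_eq_single T (fun S _ hS => ?_) (by simp), if_pos subset_rfl, mul_comm]
        split_ifs with hTS
        · rw [hT S (ssubset_of_subset_of_ne hTS (Ne.symm hS)), zero_mul]
        · rw [mul_zero]

end Walsh

end Friedgut

open Friedgut in
/-- Friedgut's lemma (p = 1/2): a monotone Boolean function `f` with `E[f] = 2^{-k}` whose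
Fourier coefficients vanish above level `k` is a `k`-umvirate. -/
theorem friedgut_umvirate {N k : ℕ} (f : Finset (Fin N) → ℝ)
    (hbool : ∀ X, f X = 0 ∨ f X = 1)
    (hmono : ∀ X Y : Finset (Fin N), X ⊆ Y → f X ≤ f Y)
    (hexp : (∑ X : Finset (Fin N), f X) / 2 ^ N = (2 : ℝ)⁻¹ ^ k)
    (hfourier : ∀ S : Finset (Fin N), k < S.card → walshCoeff f S = 0) :
    ∃ T : Finset (Fin N), T.card = k ∧ ∀ X, (f X = 1 ↔ T ⊆ X) := by
  have hf0 : 0 ≤ f := fun X => by rcases hbool X with h | h <;> simp [h]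
  have hint : ∀ X, ∃ z : ℤ, f X = z := fun X => by
    rcases hbool X with h | h
    exacts [⟨0, by simp [h]⟩, ⟨1, by simp [h]⟩]
  have hw0 : walshCoeff f ∅ = 2⁻¹ ^ k := by simpa [walshCoeff] using hexp
  obtain ⟨T, -, hT, hTmax⟩ :=
    Finite.exists_le_maximal (p := fun S => walshCoeff f S ≠ 0) (a := ∅) (by simp [hw0])
  have hmob : mobius f T = (-2) ^ T.card * walshCoeff f T :=
    mobius_eq_walshCoeff fun S hS => not_not.mp fun h => hS.not_subset (hTmax h hS.subset)
  have hmob0 : mobius f T ≠ 0 := hmob ▸ mul_ne_zero (pow_ne_zero _ (by norm_num)) hT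
  have hone : 1 ≤ 2 ^ T.card * |walshCoeff f T| := by
    simpa [hmob, abs_mul] using one_le_abs_mobius hint hmob0
  have hle : |walshCoeff f T| ≤ 2⁻¹ ^ k := hw0 ▸ abs_walshCoeff_le hf0 T
  have hcard : T.card = k := by
    refine le_antisymm (not_lt.mp fun h => hT (hfourier T h)) ?_
    have : (1 : ℝ) ≤ 2 ^ T.card * 2⁻¹ ^ k := hone.trans (by gcongr)
    rw [inv_pow, ← div_eq_mul_inv, one_le_div (by positivity)] at this
    exact (pow_le_pow_iff_right₀ one_lt_two).mp this
  have heq : |walshCoeff f T| = walshCoeff f ∅ := by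
    refine hw0 ▸ le_antisymm hle ?_
    calc (2 : ℝ)⁻¹ ^ k ≤ 2⁻¹ ^ k * (2 ^ k * |walshCoeff f T|) := by
          rw [← hcard]; exact le_mul_of_one_le_right (by positivity) hone
      _ = |walshCoeff f T| := by rw [← mul_assoc, ← mul_pow]; norm_num
  obtain ⟨ε, hε⟩ := exists_neg_one_pow_eq_of_abs_walshCoeff_eq hf0 heq
  have hsupp : ∀ X, f X ≠ 0 → T ⊆ X := fun X =>
    subset_of_ne_zero_of_neg_one_pow_eq hf0 (fun X Y h => hmono X Y h) hε
  have hfT : f T = 1 := (hbool T).resolve_left (mobius_eq_of_subset_of_ne_zero hsupp ▸ hmob0)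
  exact ⟨T, hcard, fun X => ⟨fun h => hsupp X (by simp [h]),
    fun h => (hbool X).resolve_left fun h0 => by linarith [hmono T X h]⟩⟩
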